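/- arXiv:2602.21213 — 5 statements merged into one kernel-verified Lean document; each statement's English description precedes it below -/
import Mathlib

section
/- Let U be a finite type of attributes, V a type of values with at least two elements, F a set of functional dependencies over U, and U1, U2 ⊆ U with U1 ∪ U2 = U. Then the following are equivalent: (i) for every relation r over U that satisfies every FD in F, r equals the natural join of π_{U1}(r) and π_{U2}(r); (ii) F semantically implies the FD (U1 ∩ U2) → U1, or F semantically implies the FD (U1 ∩ U2) → U2. (Homological Lossless Join Theorem, binary case: lossless join under dependency preservation iff the intersection attributes form a key for at least one component.) -/
/-- The restriction of a tuple `t : U → V` to the attribute set `W`. -/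
def Tuple.restrict {U V : Type*} (W : Set U) (t : U → V) : W → V :=
  fun a => t a

/-- The projection `π_W(r)` of a relation `r` over `U` to the attribute set `W`. -/
def Rel.proj {U V : Type*} (W : Set U) (r : Set (U → V)) : Set (W → V) :=
  (Tuple.restrict W) '' r

/-- A relation `r` over `U` satisfies the functional dependency `X → Y`. -/
def Rel.satisfiesFD {U V : Type*} (r : Set (U → V)) (X Y : Set U) : Prop :=
  ∀ t1 ∈ r, ∀ t2 ∈ r, (∀ a ∈ X, t1 a = t2 a) → ∀ a ∈ Y, t1 a = t2 a

/-- `F` semantically implies the FD `X → Y` (over value type `V`): every relation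
over `U` satisfying all FDs of `F` also satisfies `X → Y`. -/
def FDImplies {U : Type*} (V : Type*) (F : Set (Set U × Set U)) (X Y : Set U) : Prop :=
  ∀ r : Set (U → V), (∀ fd ∈ F, Rel.satisfiesFD r fd.1 fd.2) → Rel.satisfiesFD r X Y

inductive FDClosure {U : Type*} (F : Set (Set U × Set U)) (X : Set U) : U → Prop
  | base {a : U} : a ∈ X → FDClosure F X a
  | step {fd : Set U × Set U} (hfd : fd ∈ F) (h : ∀ a ∈ fd.1, FDClosure F X a)
      {b : U} (hb : b ∈ fd.2) : FDClosure F X b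

lemma FDClosure.sound {U V : Type*} {F : Set (Set U × Set U)} {X : Set U}
    {r : Set (U → V)} (hr : ∀ fd ∈ F, Rel.satisfiesFD r fd.1 fd.2)
    {t1 t2 : U → V} (ht1 : t1 ∈ r) (ht2 : t2 ∈ r)
    (hX : ∀ a ∈ X, t1 a = t2 a) : ∀ a, FDClosure F X a → t1 a = t2 a := by
  intro a ha
  induction ha with
  | base h => exact hX _ h
  | step hfd h hb ih => exact hr _ hfd t1 ht1 t2 ht2 ih _ hb

lemma FDClosure.implies {U V : Type*} {F : Set (Set U × Set U)} {X Y : Set U}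
    (h : ∀ a ∈ Y, FDClosure F X a) : FDImplies V F X Y := by
  intro r hr t1 ht1 t2 ht2 hX a ha
  exact FDClosure.sound hr ht1 ht2 hX a (h a ha)

/-- **Homological Lossless Join Theorem (binary case).**
For `U1 ∪ U2 = U`: every relation satisfying `F` equals the natural join of its
projections onto `U1` and `U2` iff `F` implies `(U1 ∩ U2) → U1` or `(U1 ∩ U2) → U2`.
(Since `U1 ∪ U2 = univ`, a tuple of the join of the projections is the same thing
as a tuple `t : U → V` whose restrictions to `U1` and `U2` lie in the respective
projections; the equality `r = π_{U1}(r) ⋈ π_{U2}(r)` is stated accordingly.) -/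
theorem binary_lossless_join_iff_key {U V : Type*} [Finite U]
    (v1 v2 : V) (hV : v1 ≠ v2)
    (F : Set (Set U × Set U)) (U1 U2 : Set U) (hU : U1 ∪ U2 = Set.univ) :
    (∀ r : Set (U → V), (∀ fd ∈ F, Rel.satisfiesFD r fd.1 fd.2) →
      ∀ t : U → V, t ∈ r ↔
        (Tuple.restrict U1 t ∈ Rel.proj U1 r ∧ Tuple.restrict U2 t ∈ Rel.proj U2 r)) ↔
    (FDImplies V F (U1 ∩ U2) U1 ∨ FDImplies V F (U1 ∩ U2) U2) := by
  classical
  constructor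
  · -- lossless → key
    intro H
    set X := U1 ∩ U2 with hX
    set C : Set U := {a | FDClosure F X a} with hC
    -- the two-tuple counterexample relation
    set s1 : U → V := fun _ => v1 with hs1
    set s2 : U → V := fun a => if a ∈ C then v1 else v2 with hs2
    set r0 : Set (U → V) := {s1, s2} with hr0
    have hs1r : s1 ∈ r0 := Or.inl rfl
    have hs2r : s2 ∈ r0 := Or.inr rfl
    have hsat : ∀ fd ∈ F, Rel.satisfiesFD r0 fd.1 fd.2 := by
      intro fd hfd p hp q hq hagree b hb
      -- key: if p,q differ (one is s1, other s2) and agree on fd.1, then fd.1 ⊆ C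
      have key : (∀ a ∈ fd.1, s1 a = s2 a) → ∀ a ∈ fd.2, s1 a = s2 a := by
        intro h a ha
        have hsub : ∀ a ∈ fd.1, a ∈ C := by
          intro a ha
          have := h a ha
          simp only [hs1, hs2] at this
          by_contra hc
          rw [if_neg hc] at this
          exact hV this
        have : a ∈ C := FDClosure.step hfd (fun x hx => hsub x hx) ha
        simp [hs1, hs2, this]
      rcases hp with hp | hp <;> rcases hq with hq | hq <;> subst hp <;> subst hq
      · rfl
      · exact key hagree b hb
      · exact (key (fun a ha => (hagree a ha).symm) b hb).symm
      · rfl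
    -- the glued tuple
    set t : U → V := fun a => if a ∈ U1 then v1 else s2 a with ht
    have hXC : ∀ a ∈ X, a ∈ C := fun a ha => FDClosure.base ha
    have ht1 : Tuple.restrict U1 t ∈ Rel.proj U1 r0 := by
      refine ⟨s1, hs1r, ?_⟩
      funext a
      simp [Tuple.restrict, ht, hs1, a.2]
    have ht2 : Tuple.restrict U2 t ∈ Rel.proj U2 r0 := by
      refine ⟨s2, hs2r, ?_⟩
      funext a
      obtain ⟨a, ha2⟩ := a
      simp only [Tuple.restrict, ht]
      by_cases h1 : a ∈ U1
      · have : a ∈ C := hXC a ⟨h1, ha2⟩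
        simp [h1, hs2, this]
      · simp [h1]
    have htr : t ∈ r0 := (H r0 hsat t).2 ⟨ht1, ht2⟩
    rcases htr with htr | htr
    · -- t = s1 : every a ∈ U2 is in C, so X → U2
      right
      apply FDClosure.implies
      intro a ha
      by_cases h1 : a ∈ U1
      · exact hXC a ⟨h1, ha⟩
      · have : t a = s1 a := congrFun htr a
        simp only [ht, hs1, if_neg h1, hs2] at this
        show a ∈ C
        by_contra hc
        rw [if_neg hc] at this
        exact hV this.symm
    · -- t = s2 : every a ∈ U1 is in C, so X → U1
      left
      apply FDClosure.implies
      intro a ha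
      have : t a = s2 a := congrFun htr a
      simp only [ht, if_pos ha, hs2] at this
      show a ∈ C
      by_contra hc
      rw [if_neg hc] at this
      exact hV this
  · -- key → lossless
    rintro hkey r hr t
    constructor
    · intro htr
      exact ⟨⟨t, htr, rfl⟩, ⟨t, htr, rfl⟩⟩
    · rintro ⟨⟨p, hpr, hp⟩, ⟨q, hqr, hq⟩⟩
      have hp1 : ∀ a ∈ U1, p a = t a := fun a ha => congrFun hp ⟨a, ha⟩
      have hq2 : ∀ a ∈ U2, q a = t a := fun a ha => congrFun hq ⟨a, ha⟩
      have hagree : ∀ a ∈ U1 ∩ U2, p a = q a := by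
        rintro a ⟨h1, h2⟩
        rw [hp1 a h1, hq2 a h2]
      rcases hkey with hkey | hkey
      · -- p = q on U1, so q = t everywhere
        have h2 : ∀ a ∈ U1, p a = q a := hkey r hr p hpr q hqr hagree
        have : q = t := by
          funext a
          have : a ∈ U1 ∪ U2 := hU ▸ Set.mem_univ a
          rcases this with h | h
          · rw [← h2 a h, hp1 a h]
          · exact hq2 a h
        rwa [← this]
      · have h2 : ∀ a ∈ U1 ∩ U2, q a = p a := fun a ha => (hagree a ha).symm
        have h3 : ∀ a ∈ U2, q a = p a := hkey r hr q hqr p hpr h2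
        have : p = t := by
          funext a
          have : a ∈ U1 ∪ U2 := hU ▸ Set.mem_univ a
          rcases this with h | h
          · exact hp1 a h
          · rw [← h3 a h]; exact hq2 a h
        rwa [← this]
end

section
/- Let U be a finite type of attributes, V a type of values, and U1, U2 ⊆ U with U1 ∪ U2 = U. If a relation r over U satisfies the FD (U1 ∩ U2) → U1, or satisfies the FD (U1 ∩ U2) → U2, then r equals the natural join of its projections π_{U1}(r) and π_{U2}(r). (Sufficiency direction of the binary lossless-join theorem, at the level of a single instance.) -/
/-- **Sufficiency direction of the binary lossless-join theorem (instance level).**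
If a single relation `r` over `U = U1 ∪ U2` satisfies `(U1 ∩ U2) → U1` or
`(U1 ∩ U2) → U2`, then `r` equals the natural join of its projections onto `U1`
and `U2` (a tuple of the join being the same as a tuple `t : U → V` whose
restrictions to `U1` and `U2` lie in the respective projections). -/
theorem binary_lossless_join_of_key {U V : Type*} [Finite U]
    (U1 U2 : Set U) (hU : U1 ∪ U2 = Set.univ) (r : Set (U → V))
    (hkey : Rel.satisfiesFD r (U1 ∩ U2) U1 ∨ Rel.satisfiesFD r (U1 ∩ U2) U2) :
    ∀ t : U → V, t ∈ r ↔
      (Tuple.restrict U1 t ∈ Rel.proj U1 r ∧ Tuple.restrict U2 t ∈ Rel.proj U2 r) := by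
  intro t
  constructor
  · intro ht
    exact ⟨⟨t, ht, rfl⟩, ⟨t, ht, rfl⟩⟩
  · rintro ⟨⟨t1, ht1, h1⟩, ⟨t2, ht2, h2⟩⟩
    have e1 : ∀ a ∈ U1, t1 a = t a := by
      intro a ha
      exact congrFun h1 ⟨a, ha⟩
    have e2 : ∀ a ∈ U2, t2 a = t a := by
      intro a ha
      exact congrFun h2 ⟨a, ha⟩
    have eint : ∀ a ∈ U1 ∩ U2, t1 a = t2 a := fun a ⟨haa, hab⟩ =>
      (e1 a haa).trans (e2 a hab).symm
    rcases hkey with hfd | hfd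
    · have : ∀ a ∈ U1, t2 a = t1 a := hfd t2 ht2 t1 ht1 (fun a ha => (eint a ha).symm)
      have : t2 = t := by
        funext a
        have ha : a ∈ U1 ∪ U2 := hU ▸ Set.mem_univ a
        rcases ha with ha | ha
        · exact (this a ha).trans (e1 a ha)
        · exact e2 a ha
      exact this ▸ ht2
    · have : ∀ a ∈ U2, t1 a = t2 a := hfd t1 ht1 t2 ht2 eint
      have : t1 = t := by
        funext a
        have ha : a ∈ U1 ∪ U2 := hU ▸ Set.mem_univ a
        rcases ha with ha | ha
        · exact e1 a ha
        · exact (this a ha).trans (e2 a ha)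
      exact this ▸ ht1
end

section
/- Let U be a finite type of attributes, V a type of values with at least two elements, F a set of FDs over U, and U1, U2 ⊆ U with U1 ∪ U2 = U. Suppose that for every relation r over U satisfying every FD in F, r equals the natural join of π_{U1}(r) and π_{U2}(r). Then F semantically implies the FD (U1 ∩ U2) → U1, or F semantically implies the FD (U1 ∩ U2) → U2. (Necessity direction of the binary lossless-join theorem.) -/
/-- FD satisfaction is preserved by subsets. -/
lemma Rel.satisfiesFD.mono {U V : Type*} {r s : Set (U → V)} (h : s ⊆ r) {X Y : Set U}
    (hr : Rel.satisfiesFD r X Y) : Rel.satisfiesFD s X Y :=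
  fun t1 h1 t2 h2 => hr t1 (h h1) t2 (h h2)

open Classical in
/-- Auxiliary step: from a two-tuple counterexample to `(U1 ∩ U2) → U1` in a relation
satisfying `F`, losslessness forces the two tuples to agree on all of `U2`. -/
lemma agree_on_other {U V : Type*}
    (F : Set (Set U × Set U)) (U1 U2 : Set U)
    (hlossless : ∀ r : Set (U → V), (∀ fd ∈ F, Rel.satisfiesFD r fd.1 fd.2) →
      ∀ t : U → V, t ∈ r ↔
        (Tuple.restrict U1 t ∈ Rel.proj U1 r ∧ Tuple.restrict U2 t ∈ Rel.proj U2 r))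
    {r : Set (U → V)} (hr : ∀ fd ∈ F, Rel.satisfiesFD r fd.1 fd.2)
    {t1 t2 : U → V} (h1 : t1 ∈ r) (h2 : t2 ∈ r)
    (hagree : ∀ a ∈ U1 ∩ U2, t1 a = t2 a)
    {a1 : U} (ha1 : a1 ∈ U1) (hne : t1 a1 ≠ t2 a1) :
    ∀ a ∈ U2, t1 a = t2 a := by
  set r0 : Set (U → V) := {t1, t2} with hr0
  have hr0sub : r0 ⊆ r := by
    intro x hx
    rcases hx with hx | hx <;> simp_all
  have hr0F : ∀ fd ∈ F, Rel.satisfiesFD r0 fd.1 fd.2 :=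
    fun fd hfd => (hr fd hfd).mono hr0sub
  set w : U → V := fun a => if a ∈ U1 then t1 a else t2 a with hw
  have hw1 : Tuple.restrict U1 w = Tuple.restrict U1 t1 := by
    funext a
    simp [Tuple.restrict, hw, a.2]
  have hw2 : Tuple.restrict U2 w = Tuple.restrict U2 t2 := by
    funext a
    by_cases h : (a : U) ∈ U1
    · simpa [Tuple.restrict, hw, h] using hagree a ⟨h, a.2⟩
    · simp [Tuple.restrict, hw, h]
  have hwmem : w ∈ r0 := by
    rw [hlossless r0 hr0F w]
    constructor
    · rw [hw1]; exact ⟨t1, by simp [hr0], rfl⟩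
    · rw [hw2]; exact ⟨t2, by simp [hr0], rfl⟩
  have hweq : w = t1 := by
    rcases hwmem with h | h
    · exact h
    · exfalso
      apply hne
      have := congrFun h a1
      simpa [hw, ha1] using this
  intro a ha
  by_cases h : a ∈ U1
  · exact hagree a ⟨h, ha⟩
  · have := congrFun hweq a
    simp only [hw, if_neg h] at this
    exact this.symm

open Classical in
/-- **Necessity direction of the binary lossless-join theorem.**
If every relation over `U = U1 ∪ U2` satisfying `F` equals the natural join of
its projections onto `U1` and `U2`, then `F` semantically implies
`(U1 ∩ U2) → U1` or `(U1 ∩ U2) → U2`. (`V` has at least two elements.) -/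
theorem key_of_binary_lossless_join {U V : Type*} [Finite U]
    (v1 v2 : V) (hV : v1 ≠ v2)
    (F : Set (Set U × Set U)) (U1 U2 : Set U) (hU : U1 ∪ U2 = Set.univ)
    (hlossless : ∀ r : Set (U → V), (∀ fd ∈ F, Rel.satisfiesFD r fd.1 fd.2) →
      ∀ t : U → V, t ∈ r ↔
        (Tuple.restrict U1 t ∈ Rel.proj U1 r ∧ Tuple.restrict U2 t ∈ Rel.proj U2 r)) :
    FDImplies V F (U1 ∩ U2) U1 ∨ FDImplies V F (U1 ∩ U2) U2 := by
  by_contra hcon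
  push_neg at hcon
  obtain ⟨hc1, hc2⟩ := hcon
  simp only [FDImplies, Rel.satisfiesFD, not_forall] at hc1 hc2
  obtain ⟨r, hrF, t1, h1, t2, h2, hagreeT, a1, ha1, hneT⟩ := hc1
  obtain ⟨r', hrF', s1, h1', s2, h2', hagreeS, a2, ha2, hneS⟩ := hc2
  -- symmetric lossless-join version for U2/U1:
  have hlossless' : ∀ q : Set (U → V), (∀ fd ∈ F, Rel.satisfiesFD q fd.1 fd.2) →
      ∀ t : U → V, t ∈ q ↔
        (Tuple.restrict U2 t ∈ Rel.proj U2 q ∧ Tuple.restrict U1 t ∈ Rel.proj U1 q) := by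
    intro q hq t
    rw [hlossless q hq t, and_comm]
  have hagreeS' : ∀ a ∈ U2 ∩ U1, s1 a = s2 a := by
    intro a ha; exact hagreeS a ⟨ha.2, ha.1⟩
  -- t1, t2 agree on all of U2; s1, s2 agree on all of U1
  have hT2 : ∀ a ∈ U2, t1 a = t2 a :=
    agree_on_other F U1 U2 hlossless hrF h1 h2 hagreeT ha1 hneT
  have hS1 : ∀ a ∈ U1, s1 a = s2 a :=
    agree_on_other F U2 U1 hlossless' hrF' h1' h2' hagreeS' ha2 hneS
  have ha1' : a1 ∉ U2 := fun h => hneT (hT2 a1 h)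
  have ha2' : a2 ∉ U1 := fun h => hneS (hS1 a2 h)
  -- build the mixed relation
  set u1 : U → V := fun a => if a ∈ U1 then t1 a else s1 a with hu1
  set u2 : U → V := fun a => if a ∈ U1 then t2 a else s2 a with hu2
  set q : Set (U → V) := {u1, u2} with hq
  have hmemU2 : ∀ a : U, a ∉ U1 → a ∈ U2 := by
    intro a h
    have : a ∈ U1 ∪ U2 := by rw [hU]; trivial
    exact this.resolve_left h
  -- the key agreement transfer
  have hkey : ∀ a : U, u1 a = u2 a → (t1 a = t2 a ∧ s1 a = s2 a) := by
    intro a hua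
    by_cases h : a ∈ U1
    · refine ⟨by simpa [hu1, hu2, h] using hua, hS1 a h⟩
    · exact ⟨hT2 a (hmemU2 a h), by simpa [hu1, hu2, h] using hua⟩
  have hqF : ∀ fd ∈ F, Rel.satisfiesFD q fd.1 fd.2 := by
    intro fd hfd p1 hp1 p2 hp2 hX a ha
    have main : ∀ a ∈ fd.2, u1 a = u2 a → True := fun _ _ _ => trivial
    -- handle the four cases
    rcases hp1 with hp1 | hp1 <;> rcases hp2 with hp2 | hp2 <;> subst hp1 <;> subst hp2
    · rfl
    · -- u1 vs u2
      have hXt : ∀ b ∈ fd.1, t1 b = t2 b := fun b hb => (hkey b (hX b hb)).1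
      have hXs : ∀ b ∈ fd.1, s1 b = s2 b := fun b hb => (hkey b (hX b hb)).2
      have hYt := hrF fd hfd t1 h1 t2 h2 hXt a ha
      have hYs := hrF' fd hfd s1 h1' s2 h2' hXs a ha
      by_cases h : a ∈ U1 <;> simp [hu1, hu2, h, hYt, hYs]
    · -- u2 vs u1
      have hXt : ∀ b ∈ fd.1, t1 b = t2 b := fun b hb => (hkey b (hX b hb).symm).1
      have hXs : ∀ b ∈ fd.1, s1 b = s2 b := fun b hb => (hkey b (hX b hb).symm).2
      have hYt := hrF fd hfd t1 h1 t2 h2 hXt a ha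
      have hYs := hrF' fd hfd s1 h1' s2 h2' hXs a ha
      by_cases h : a ∈ U1 <;> simp [hu1, hu2, h, hYt, hYs]
    · rfl
  -- agreement of u1, u2 on U1 ∩ U2
  have huagree : ∀ a ∈ U1 ∩ U2, u1 a = u2 a := by
    intro a ha
    simp [hu1, hu2, ha.1, hagreeT a ha]
  -- glue w of u1 on U1 and u2 on U2
  set w : U → V := fun a => if a ∈ U1 then u1 a else u2 a with hw
  have hw1 : Tuple.restrict U1 w = Tuple.restrict U1 u1 := by
    funext a; simp [Tuple.restrict, hw, a.2]
  have hw2 : Tuple.restrict U2 w = Tuple.restrict U2 u2 := by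
    funext a
    by_cases h : (a : U) ∈ U1
    · simpa [Tuple.restrict, hw, h] using huagree a ⟨h, a.2⟩
    · simp [Tuple.restrict, hw, h]
  have hwmem : w ∈ q := by
    rw [hlossless q hqF w]
    constructor
    · rw [hw1]; exact ⟨u1, by simp [hq], rfl⟩
    · rw [hw2]; exact ⟨u2, by simp [hq], rfl⟩
  rcases hwmem with h | h
  · -- w = u1: contradiction at a2
    have := congrFun h a2
    simp only [hw, hu1, hu2, if_neg ha2'] at this
    exact hneS this.symm
  · -- w = u2: contradiction at a1
    have := congrFun h a1
    simp only [hw, hu1, hu2, if_pos ha1] at this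
    exact hneT this
end

section
/- Let U be a finite type of attributes, V a type of values, and U1, U2 ⊆ U. If a relation r over U satisfies the FD (U1 ∩ U2) → U1, then the restriction map s ↦ s|_{U1 ∩ U2} from the projection π_{U1}(r) to the projection π_{U1∩U2}(r) is a bijection. (Instance-level content of the retraction in Proposition 3.1: when the intersection attributes determine all of U1, the keyed component collapses onto the intersection without loss.) -/
/-- The restriction map from tuples over `W1` to tuples over a subset `W2 ⊆ W1`. -/
def Tuple.restrict₂ {U V : Type*} {W1 W2 : Set U} (h : W2 ⊆ W1) (s : W1 → V) : W2 → V :=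
  fun a => s ⟨a.1, h a.2⟩

/-- **Instance-level retraction (Proposition 3.1).** If `r` satisfies the FD
`(U1 ∩ U2) → U1`, then the restriction map `s ↦ s|_{U1 ∩ U2}` is a bijection
from `π_{U1}(r)` onto `π_{U1 ∩ U2}(r)`. -/
theorem restrict_bijOn_proj_of_key {U V : Type*} [Finite U]
    (U1 U2 : Set U) (r : Set (U → V))
    (hkey : Rel.satisfiesFD r (U1 ∩ U2) U1) :
    Set.BijOn (Tuple.restrict₂ (Set.inter_subset_left : U1 ∩ U2 ⊆ U1))
      (Rel.proj U1 r) (Rel.proj (U1 ∩ U2) r) := by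
  refine ⟨?_, ?_, ?_⟩
  · rintro s ⟨t, ht, rfl⟩
    exact ⟨t, ht, rfl⟩
  · rintro s1 ⟨t1, ht1, rfl⟩ s2 ⟨t2, ht2, rfl⟩ heq
    funext a
    refine hkey t1 ht1 t2 ht2 (fun b hb => ?_) a a.2
    exact congrFun heq ⟨b, hb⟩
  · rintro s ⟨t, ht, rfl⟩
    exact ⟨Tuple.restrict U1 t, ⟨t, ht, rfl⟩, rfl⟩
end

section
/- Let U be a finite type of attributes, V a type of values, W1, W2 ⊆ U, and let r1 be a relation over W1 and r2 a relation over W2. Then the natural join of the semijoin r1 ⋉ r2 with r2 equals the natural join of r1 with r2: (r1 ⋉ r2) ⋈ r2 = r1 ⋈ r2. (Semijoin reduction along a join-tree edge does not change the join result.) -/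
/-- The natural join of a relation `r1` over `W1` and a relation `r2` over `W2`:
the relation over `W1 ∪ W2` consisting of tuples whose restrictions to `W1`
and `W2` lie in `r1` and `r2` respectively. -/
def Rel.join {U V : Type*} {W1 W2 : Set U}
    (r1 : Set (W1 → V)) (r2 : Set (W2 → V)) : Set (↥(W1 ∪ W2) → V) :=
  { t | (fun a : W1 => t ⟨a.1, Or.inl a.2⟩) ∈ r1 ∧
        (fun a : W2 => t ⟨a.1, Or.inr a.2⟩) ∈ r2 }

/-- The semijoin `r1 ⋉ r2`: the tuples of `r1` that agree with some tuple of
`r2` on all attributes of `W1 ∩ W2`. -/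
def Rel.semijoin {U V : Type*} {W1 W2 : Set U}
    (r1 : Set (W1 → V)) (r2 : Set (W2 → V)) : Set (W1 → V) :=
  { t ∈ r1 | ∃ t' ∈ r2, ∀ (a : U) (h1 : a ∈ W1) (h2 : a ∈ W2), t ⟨a, h1⟩ = t' ⟨a, h2⟩ }

/-- **Semijoin reduction preserves the join:** `(r1 ⋉ r2) ⋈ r2 = r1 ⋈ r2`. -/
theorem semijoin_join_eq_join {U V : Type*} [Finite U] {W1 W2 : Set U}
    (r1 : Set (W1 → V)) (r2 : Set (W2 → V)) :
    Rel.join (Rel.semijoin r1 r2) r2 = Rel.join r1 r2 := by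
  ext t
  constructor
  · rintro ⟨⟨h1, _⟩, h2⟩
    exact ⟨h1, h2⟩
  · rintro ⟨h1, h2⟩
    exact ⟨⟨h1, _, h2, fun a ha1 ha2 => rfl⟩, h2⟩
end
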